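/- arXiv:2304.14100 — 5 statements merged into one kernel-verified Lean document; each statement's English description precedes it below -/
import Mathlib

section
/- Let $\alpha \in (0,1)$, let $0 = t_0 < t_1 < \dots < t_N = T$ be any partition with steps $\tau_j = t_j - t_{j-1}$, let $V$ be a real inner product space, and let $u^0, u^1, \dots, u^n \in V$ with $1 \le n \le N$. Then the L1 approximation of the Caputo derivative satisfies $\left\langle \sum_{j=1}^{n} k_{n,j}\,(u^{j} - u^{j-1}),\; u^{n} \right\rangle \;\ge\; \frac{1}{2} \sum_{j=1}^{n} k_{n,j}\,\big(\|u^{j}\|^2 - \|u^{j-1}\|^2\big).$ -/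
/-!
Polarization gives
`2⟪u j - u (j-1), u n⟫ = ‖u j‖² - ‖u (j-1)‖² + ‖u (j-1) - u n‖² - ‖u j - u n‖²`,
so it suffices that `∑ j, k n j * (c (j-1) - c j) ≥ 0` for `c j = ‖u j - u n‖²`, which vanishes
at `j = n`. Summation by parts shows this for any weights that are nonnegative and nondecreasing
in `j`. Up to the factor `Γ(2-α)⁻¹`, the kernel `k n j` is the slope of the increasing concave
function `x ↦ x ^ (1-α)` over `[t n - t j, t n - t (j-1)]`; these intervals move left as `j`
grows, so the kernels are nonnegative and nondecreasing.
-/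

open RealInnerProductSpace Finset

lemma two_mul_inner_sub_eq {V : Type*} [NormedAddCommGroup V] [InnerProductSpace ℝ V]
    (x y z : V) :
    2 * ⟪x - y, z⟫ = ‖x‖ ^ 2 - ‖y‖ ^ 2 + (‖y - z‖ ^ 2 - ‖x - z‖ ^ 2) := by
  rw [inner_sub_left, norm_sub_sq_real x z, norm_sub_sq_real y z]
  ring

lemma sum_Icc_mul_sub_add_mul_nonneg {a c : ℕ → ℝ} {n : ℕ} (hn : 1 ≤ n)
    (ha₁ : 0 ≤ a 1) (ha : ∀ j, 1 ≤ j → j < n → a j ≤ a (j + 1)) (hc : ∀ j, j < n → 0 ≤ c j) :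
    0 ≤ ∑ j ∈ Icc 1 n, a j * (c (j - 1) - c j) + a n * c n := by
  induction n, hn using Nat.le_induction with
  | base =>
    simp only [Icc_self, sum_singleton, Nat.sub_self]
    linarith [mul_nonneg ha₁ (hc 0 one_pos)]
  | succ m hm ih =>
    have hstep : a m * c m ≤ a (m + 1) * c m :=
      mul_le_mul_of_nonneg_right (ha m hm m.lt_succ_self) (hc m m.lt_succ_self)
    have ih := ih (fun j hj hjm => ha j hj (by omega)) (fun j hj => hc j (by omega))
    rw [sum_Icc_succ_top (by omega), Nat.add_sub_cancel]
    linarith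

theorem half_sum_mul_sq_norm_sub_le_inner_sum_smul {V : Type*} [NormedAddCommGroup V]
    [InnerProductSpace ℝ V] {a : ℕ → ℝ} {n : ℕ} (hn : 1 ≤ n) (ha₁ : 0 ≤ a 1)
    (ha : ∀ j, 1 ≤ j → j < n → a j ≤ a (j + 1)) (u : ℕ → V) :
    (1 / 2 : ℝ) * ∑ j ∈ Icc 1 n, a j * (‖u j‖ ^ 2 - ‖u (j - 1)‖ ^ 2) ≤
      ⟪∑ j ∈ Icc 1 n, a j • (u j - u (j - 1)), u n⟫ := by
  have hsplit : 2 * ⟪∑ j ∈ Icc 1 n, a j • (u j - u (j - 1)), u n⟫ =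
      ∑ j ∈ Icc 1 n, a j * (‖u j‖ ^ 2 - ‖u (j - 1)‖ ^ 2) +
        ∑ j ∈ Icc 1 n, a j * (‖u (j - 1) - u n‖ ^ 2 - ‖u j - u n‖ ^ 2) := by
    simp only [sum_inner, real_inner_smul_left, mul_sum, ← sum_add_distrib]
    refine sum_congr rfl fun j _ => ?_
    linear_combination a j * two_mul_inner_sub_eq (u j) (u (j - 1)) (u n)
  have hrest := sum_Icc_mul_sub_add_mul_nonneg (c := fun j => ‖u j - u n‖ ^ 2) hn ha₁ ha
    (fun j _ => sq_nonneg _)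
  rw [sub_self, norm_zero, zero_pow two_ne_zero, mul_zero, add_zero] at hrest
  linarith

lemma inv_mul_integral_sub_rpow_eq_slope {r : ℝ} (hr : -1 < r) (a b c : ℝ) :
    (b - a)⁻¹ * ∫ s in a..b, (c - s) ^ r =
      slope (fun x : ℝ => x ^ (r + 1)) (c - b) (c - a) / (r + 1) := by
  rw [intervalIntegral.integral_comp_sub_left (fun x : ℝ => x ^ r), integral_rpow (Or.inl hr),
    slope_def_field, sub_sub_sub_cancel_left]
  ring

lemma ConcaveOn.slope_anti_adjacent' {s : Set ℝ} {f : ℝ → ℝ} (hf : ConcaveOn ℝ s f)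
    {x y z : ℝ} (hx : x ∈ s) (hz : z ∈ s) (hxy : x < y) (hyz : y < z) :
    slope f y z ≤ slope f x y := by
  simpa only [slope_def_field] using hf.slope_anti_adjacent hx hz hxy hyz

theorem L1_discrete_derivative_positivity_general
    {V : Type*} [NormedAddCommGroup V] [InnerProductSpace ℝ V]
    (α : ℝ) (hα : α ∈ Set.Ioo (0 : ℝ) 1)
    (N : ℕ) (t : ℕ → ℝ)
    (hmono : ∀ i j, i < j → j ≤ N → t i < t j)
    (τ : ℕ → ℝ) (hτ : ∀ j, 1 ≤ j → τ j = t j - t (j - 1))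
    (k : ℕ → ℕ → ℝ)
    (hk : ∀ n j, 1 ≤ j → j ≤ n →
      k n j = (τ j)⁻¹ / Real.Gamma (1 - α) * ∫ s in (t (j - 1))..(t j), (t n - s) ^ (-α))
    (n : ℕ) (hn1 : 1 ≤ n) (hn2 : n ≤ N)
    (u : ℕ → V) :
    (1 / 2 : ℝ) * ∑ j ∈ Finset.Icc 1 n, k n j * (‖u j‖ ^ 2 - ‖u (j - 1)‖ ^ 2) ≤
      ⟪∑ j ∈ Finset.Icc 1 n, k n j • (u j - u (j - 1)), u n⟫ := by
  obtain ⟨hα₀, hα₁⟩ := hα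
  have hΓ : 0 < (-α + 1) * Real.Gamma (1 - α) :=
    mul_pos (by linarith) (Real.Gamma_pos_of_pos (by linarith))
  have hkernel : ∀ j, 1 ≤ j → j ≤ n → k n j =
      slope (fun x : ℝ => x ^ (-α + 1)) (t n - t j) (t n - t (j - 1)) /
        ((-α + 1) * Real.Gamma (1 - α)) := by
    intro j hj hjn
    rw [hk n j hj hjn, hτ j hj, div_mul_eq_mul_div,
      inv_mul_integral_sub_rpow_eq_slope (by linarith), div_div]
  have hgap : ∀ i j, i < j → j ≤ n → t n - t j < t n - t i := fun i j hij hjn =>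
    sub_lt_sub_left (hmono i j hij (hjn.trans hn2)) _
  have hgap_nonneg : ∀ j, j ≤ n → t n - t j ∈ Set.Ici 0 := fun j hjn =>
    sub_nonneg.2 <| hjn.eq_or_lt.elim (fun h => h ▸ le_rfl) fun h => (hmono j n h hn2).le
  refine half_sum_mul_sq_norm_sub_le_inner_sum_smul hn1 ?_ ?_ u
  · rw [hkernel 1 le_rfl hn1]
    exact div_nonneg ((Real.monotoneOn_rpow_Ici_of_exponent_nonneg (by linarith)).slope_nonneg
      (hgap_nonneg 1 hn1) (hgap_nonneg 0 (Nat.zero_le n))) hΓ.le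
  · intro j hj hjn
    rw [hkernel j hj hjn.le, hkernel (j + 1) (by omega) hjn, Nat.add_sub_cancel]
    gcongr
    exact (Real.concaveOn_rpow (by linarith) (by linarith)).slope_anti_adjacent'
      (hgap_nonneg (j + 1) hjn) (hgap_nonneg (j - 1) (by omega)) (hgap j (j + 1) j.lt_succ_self hjn)
      (hgap (j - 1) j (by omega) hjn.le)

/-- For `α ∈ (0,1)`, any partition `0 = t 0 < t 1 < ⋯ < t N = T`, a real inner
product space `V` and vectors `u 0, …, u n` in `V` with `1 ≤ n ≤ N`, the L1
approximation of the Caputo derivative satisfies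
`⟪∑ j in Icc 1 n, k n j • (u j - u (j-1)), u n⟫ ≥ (1/2) ∑ j, k n j * (‖u j‖² - ‖u (j-1)‖²)`. -/
theorem L1_discrete_derivative_positivity
    {V : Type*} [NormedAddCommGroup V] [InnerProductSpace ℝ V]
    (α : ℝ) (hα : α ∈ Set.Ioo (0 : ℝ) 1)
    (N : ℕ) (T : ℝ) (t : ℕ → ℝ)
    (ht0 : t 0 = 0) (htN : t N = T)
    (hmono : ∀ i j, i < j → j ≤ N → t i < t j)
    (τ : ℕ → ℝ) (hτ : ∀ j, 1 ≤ j → τ j = t j - t (j - 1))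
    (k : ℕ → ℕ → ℝ)
    (hk : ∀ n j, 1 ≤ j → j ≤ n →
      k n j = (τ j)⁻¹ / Real.Gamma (1 - α) * ∫ s in (t (j - 1))..(t j), (t n - s) ^ (-α))
    (n : ℕ) (hn1 : 1 ≤ n) (hn2 : n ≤ N)
    (u : ℕ → V) :
    (1 / 2 : ℝ) * ∑ j ∈ Finset.Icc 1 n, k n j * (‖u j‖ ^ 2 - ‖u (j - 1)‖ ^ 2) ≤
      ⟪∑ j ∈ Finset.Icc 1 n, k n j • (u j - u (j - 1)), u n⟫ :=
  L1_discrete_derivative_positivity_general α hα N t hmono τ hτ k hk n hn1 hn2 u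
end

section
/- Let $\alpha \in (0,1)$, $T > 0$, $\delta \ge 1$, and consider the graded mesh. For $2 \le n \le N$ and $1 \le j \le n-1$ define $w_{n,j} := \tau_n^{\alpha/2}\,\tau_{j+1}\,\tau_j^{-\alpha/2} + \tau_n^{\alpha}\,(k_{n,j+1} - k_{n,j})$. Then $w_{n,j} > 0$ for all such $n, j$, and there exists a constant $C > 0$, depending only on $\alpha$, $\delta$ and $T$, such that $\sum_{j=1}^{n-1} w_{n,j} \le C\,(1 + T)$ for every $N \ge 2$ and every $2 \le n \le N$. -/
/-!
The L1 kernel has the closed form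
`k n j = ((t n - t (j-1))^(1-α) - (t n - t j)^(1-α)) / (τ j * Γ(2-α))`,
a secant slope of the concave function `s ↦ s^(1-α)`. Hence `k n j` increases in `j`, which makes
every weight positive, and the kernel part of the sum telescopes to
`τ n^α * (k n n - k n 1) ≤ τ n^α * k n n = 1 / Γ(2-α)`.
For the other part, `(τ n / τ j)^(α/2) ≤ 1 + τ n / τ j`, and convexity of `x ↦ x^δ` gives the
mesh bounds `τ (j+1) ≤ (2^δ - 1) τ j` and `n τ n ≤ (2^δ - 1) T`, so it sums to at most
`T + (2^δ - 1)^2 T`.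
-/

open Finset Real

section RpowDifferences

variable {δ x : ℝ}

lemma rpow_le_one_add_self {p : ℝ} (hx : 0 ≤ x) (hp₀ : 0 ≤ p) (hp₁ : p ≤ 1) :
    x ^ p ≤ 1 + x := by
  rcases le_total x 1 with h | h
  · linarith [rpow_le_one hx h hp₀]
  · linarith [rpow_one x ▸ rpow_le_rpow_of_exponent_le h hp₁]

lemma add_one_rpow_sub_rpow_le (hδ : 1 ≤ δ) (hx : 1 ≤ x) :
    (x + 1) ^ δ - x ^ δ ≤ (2 ^ δ - 1) * x ^ (δ - 1) := by
  have hx₀ : 0 < x := by linarith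
  have hsecant := (convexOn_rpow hδ).secant_mono (a := x) (x := x + 1) (y := 2 * x)
    (Set.mem_Ici.2 hx₀.le) (Set.mem_Ici.2 (by linarith)) (Set.mem_Ici.2 (by linarith))
    (ne_of_gt (by linarith)) (ne_of_gt (by linarith)) (by linarith)
  calc (x + 1) ^ δ - x ^ δ = ((x + 1) ^ δ - x ^ δ) / (x + 1 - x) := by ring
    _ ≤ ((2 * x) ^ δ - x ^ δ) / (2 * x - x) := hsecant
    _ = (2 ^ δ - 1) * x ^ (δ - 1) := by
      rw [mul_rpow zero_le_two hx₀.le, rpow_sub_one hx₀.ne']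
      field_simp
      ring

lemma rpow_sub_sub_one_rpow_le_add_one_rpow_sub_rpow (hδ : 1 ≤ δ) (hx : 1 ≤ x) :
    x ^ δ - (x - 1) ^ δ ≤ (x + 1) ^ δ - x ^ δ := by
  have hslope := (convexOn_rpow hδ).slope_mono_adjacent (x := x - 1) (y := x) (z := x + 1)
    (Set.mem_Ici.2 (by linarith)) (Set.mem_Ici.2 (by linarith)) (by linarith) (by linarith)
  rwa [sub_sub_cancel, add_sub_cancel_left, div_one, div_one] at hslope

lemma rpow_sub_one_le_rpow_sub_sub_one_rpow (hδ : 1 ≤ δ) (hx : 1 ≤ x) :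
    x ^ (δ - 1) ≤ x ^ δ - (x - 1) ^ δ := by
  have hsplit : ∀ y : ℝ, 0 ≤ y → y ^ δ = y ^ (δ - 1) * y := fun y hy => by
    simpa using rpow_add' hy (show δ - 1 + 1 ≠ 0 by linarith)
  have hmono : (x - 1) ^ (δ - 1) ≤ x ^ (δ - 1) :=
    rpow_le_rpow (by linarith) (by linarith) (by linarith)
  rw [hsplit x (by linarith), hsplit (x - 1) (by linarith)]
  nlinarith [mul_le_mul_of_nonneg_right hmono (sub_nonneg.2 hx)]

end RpowDifferences

noncomputable def meshStep (t : ℕ → ℝ) (m : ℕ) : ℝ := t m - t (m - 1)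

lemma meshStep_pos {t : ℕ → ℝ} (ht : StrictMono t) {m : ℕ} (hm : 1 ≤ m) : 0 < meshStep t m :=
  sub_pos.2 (ht (by omega))

section GradedMesh

noncomputable def gradedMesh (T δ : ℝ) (N m : ℕ) : ℝ := T * ((m : ℝ) / N) ^ δ

variable {T δ : ℝ} {N : ℕ}

lemma gradedMesh_strictMono (hT : 0 < T) (hδ : 0 < δ) (hN : 0 < N) :
    StrictMono (gradedMesh T δ N) := fun a b hab =>
  mul_lt_mul_of_pos_left (rpow_lt_rpow (by positivity)
    (div_lt_div_of_pos_right (by exact_mod_cast hab) (by exact_mod_cast hN)) hδ) hT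

lemma gradedMesh_nonneg (hT : 0 ≤ T) (m : ℕ) : 0 ≤ gradedMesh T δ N m := by
  unfold gradedMesh
  positivity

lemma gradedMesh_le (hT : 0 ≤ T) (hδ : 0 ≤ δ) {m : ℕ} (hm : m ≤ N) : gradedMesh T δ N m ≤ T :=
  mul_le_of_le_one_right hT
    (rpow_le_one (by positivity) (div_le_one_of_le₀ (by exact_mod_cast hm) N.cast_nonneg) hδ)

lemma meshStep_gradedMesh {m : ℕ} (hm : 1 ≤ m) :
    meshStep (gradedMesh T δ N) m = T / (N : ℝ) ^ δ * ((m : ℝ) ^ δ - ((m : ℝ) - 1) ^ δ) := by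
  have hm' : (0 : ℝ) ≤ (m : ℝ) - 1 := by
    have : (1 : ℝ) ≤ m := by exact_mod_cast hm
    linarith
  rw [meshStep, gradedMesh, gradedMesh, Nat.cast_sub hm, Nat.cast_one,
    div_rpow m.cast_nonneg N.cast_nonneg, div_rpow hm' N.cast_nonneg]
  ring

lemma meshStep_gradedMesh_succ_le (hT : 0 ≤ T) (hδ : 1 ≤ δ) {j : ℕ} (hj : 1 ≤ j) :
    meshStep (gradedMesh T δ N) (j + 1) ≤ (2 ^ δ - 1) * meshStep (gradedMesh T δ N) j := by
  have hx : (1 : ℝ) ≤ j := by exact_mod_cast hj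
  have hB : (0 : ℝ) ≤ 2 ^ δ - 1 := sub_nonneg.2 (one_le_rpow one_le_two (by linarith))
  have hstep : ((j : ℝ) + 1) ^ δ - (j : ℝ) ^ δ ≤ (2 ^ δ - 1) * ((j : ℝ) ^ δ - ((j : ℝ) - 1) ^ δ) :=
    (add_one_rpow_sub_rpow_le hδ hx).trans
      (mul_le_mul_of_nonneg_left (rpow_sub_one_le_rpow_sub_sub_one_rpow hδ hx) hB)
  rw [meshStep_gradedMesh (by omega), meshStep_gradedMesh hj, Nat.cast_add_one, add_sub_cancel_right]
  calc T / (N : ℝ) ^ δ * (((j : ℝ) + 1) ^ δ - (j : ℝ) ^ δ)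
      ≤ T / (N : ℝ) ^ δ * ((2 ^ δ - 1) * ((j : ℝ) ^ δ - ((j : ℝ) - 1) ^ δ)) := by gcongr
    _ = (2 ^ δ - 1) * (T / (N : ℝ) ^ δ * ((j : ℝ) ^ δ - ((j : ℝ) - 1) ^ δ)) := by ring

lemma natCast_mul_meshStep_gradedMesh_le (hT : 0 ≤ T) (hδ : 1 ≤ δ) {n : ℕ} (hn : 1 ≤ n)
    (hnN : n ≤ N) : n * meshStep (gradedMesh T δ N) n ≤ (2 ^ δ - 1) * T := by
  have hx : (1 : ℝ) ≤ n := by exact_mod_cast hn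
  have hB : (0 : ℝ) ≤ 2 ^ δ - 1 := sub_nonneg.2 (one_le_rpow one_le_two (by linarith))
  have hNδ : (n : ℝ) ^ δ ≤ (N : ℝ) ^ δ :=
    rpow_le_rpow (by positivity) (by exact_mod_cast hnN) (by linarith)
  have hstep : (n : ℝ) ^ δ - ((n : ℝ) - 1) ^ δ ≤ (2 ^ δ - 1) * (n : ℝ) ^ (δ - 1) :=
    (rpow_sub_sub_one_rpow_le_add_one_rpow_sub_rpow hδ hx).trans (add_one_rpow_sub_rpow_le hδ hx)
  rw [meshStep_gradedMesh hn]
  calc (n : ℝ) * (T / (N : ℝ) ^ δ * ((n : ℝ) ^ δ - ((n : ℝ) - 1) ^ δ))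
      ≤ n * (T / (N : ℝ) ^ δ * ((2 ^ δ - 1) * (n : ℝ) ^ (δ - 1))) := by gcongr
    _ = (2 ^ δ - 1) * T * ((n : ℝ) ^ δ / (N : ℝ) ^ δ) := by
      rw [rpow_sub_one (by positivity)]
      field_simp
    _ ≤ (2 ^ δ - 1) * T * 1 := by
      gcongr
      exact div_le_one_of_le₀ hNδ (by positivity)
    _ = (2 ^ δ - 1) * T := mul_one _

end GradedMesh

section L1Kernel

variable {α : ℝ} {t : ℕ → ℝ}

noncomputable def l1Kernel (α : ℝ) (t : ℕ → ℝ) (n j : ℕ) : ℝ :=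
  (meshStep t j)⁻¹ / Gamma (1 - α) * ∫ s in t (j - 1)..t j, (t n - s) ^ (-α)

lemma integral_sub_rpow_neg (hα : α < 1) (a b c : ℝ) :
    ∫ s in a..b, (c - s) ^ (-α) = ((c - a) ^ (1 - α) - (c - b) ^ (1 - α)) / (1 - α) := by
  rw [intervalIntegral.integral_comp_sub_left (fun u => u ^ (-α)) c,
    integral_rpow (Or.inl (by linarith))]
  ring_nf

lemma l1Kernel_eq (hα : α < 1) (t : ℕ → ℝ) (n j : ℕ) :
    l1Kernel α t n j =
      ((t n - t (j - 1)) ^ (1 - α) - (t n - t j) ^ (1 - α)) / (meshStep t j * Gamma (2 - α)) := by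
  rw [l1Kernel, integral_sub_rpow_neg hα, show 2 - α = 1 - α + 1 by ring,
    Gamma_add_one (by linarith)]
  simp only [div_eq_mul_inv, mul_inv]
  ring

lemma l1Kernel_nonneg (hα : α < 1) (ht : Monotone t) {n j : ℕ} (hjn : j ≤ n) :
    0 ≤ l1Kernel α t n j := by
  have hprev := ht (Nat.sub_le j 1)
  have hnum : (t n - t j) ^ (1 - α) ≤ (t n - t (j - 1)) ^ (1 - α) :=
    rpow_le_rpow (sub_nonneg.2 (ht hjn)) (by linarith) (by linarith)
  have hτ : 0 ≤ meshStep t j := sub_nonneg.2 hprev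
  have hΓ : 0 < Gamma (2 - α) := Gamma_pos_of_pos (by linarith)
  rw [l1Kernel_eq hα]
  exact div_nonneg (sub_nonneg.2 hnum) (by positivity)

lemma l1Kernel_le_l1Kernel_succ (hα₀ : 0 ≤ α) (hα₁ : α < 1) (ht : StrictMono t) {n j : ℕ}
    (hj : 1 ≤ j) (hjn : j + 1 ≤ n) : l1Kernel α t n j ≤ l1Kernel α t n (j + 1) := by
  have h₁ := ht (show j - 1 < j by omega)
  have h₂ := ht (show j < j + 1 by omega)
  have h₃ := ht.monotone hjn
  have hslope := (concaveOn_rpow (p := 1 - α) (by linarith) (by linarith)).slope_anti_adjacent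
    (x := t n - t (j + 1)) (y := t n - t j) (z := t n - t (j - 1))
    (Set.mem_Ici.2 (by linarith)) (Set.mem_Ici.2 (by linarith)) (by linarith) (by linarith)
  have hΓ : 0 ≤ Gamma (2 - α) := (Gamma_pos_of_pos (by linarith)).le
  rw [l1Kernel_eq hα₁, l1Kernel_eq hα₁, ← div_div, ← div_div]
  refine div_le_div_of_nonneg_right ?_ hΓ
  convert hslope using 2 <;> simp only [meshStep, Nat.add_sub_cancel] <;> ring

lemma meshStep_rpow_mul_l1Kernel_self (hα : α < 1) {n : ℕ} (hτ : 0 < meshStep t n) :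
    meshStep t n ^ α * l1Kernel α t n n = 1 / Gamma (2 - α) := by
  have hΓ : Gamma (2 - α) ≠ 0 := (Gamma_pos_of_pos (by linarith)).ne'
  rw [l1Kernel_eq hα, sub_self, zero_rpow (by linarith), sub_zero]
  change meshStep t n ^ α * (meshStep t n ^ (1 - α) / (meshStep t n * Gamma (2 - α))) = _
  rw [mul_div_assoc', ← rpow_add hτ, add_sub_cancel, rpow_one]
  field_simp

end L1Kernel

section L1Weight

variable {α : ℝ} {t : ℕ → ℝ}

noncomputable def l1Weight (α : ℝ) (t : ℕ → ℝ) (n j : ℕ) : ℝ :=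
  meshStep t n ^ (α / 2) * meshStep t (j + 1) * meshStep t j ^ (-(α / 2)) +
    meshStep t n ^ α * (l1Kernel α t n (j + 1) - l1Kernel α t n j)

lemma l1Weight_pos (hα₀ : 0 ≤ α) (hα₁ : α < 1) (ht : StrictMono t) {n j : ℕ} (hj : 1 ≤ j)
    (hjn : j + 1 ≤ n) : 0 < l1Weight α t n j := by
  have hτn := meshStep_pos ht (show 1 ≤ n by omega)
  have hτj := meshStep_pos ht hj
  have hτj₁ := meshStep_pos ht (show 1 ≤ j + 1 by omega)
  exact add_pos_of_pos_of_nonneg (by positivity)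
    (mul_nonneg (by positivity) (sub_nonneg.2 (l1Kernel_le_l1Kernel_succ hα₀ hα₁ ht hj hjn)))

lemma rpow_mul_mul_rpow_neg_le {a b c p : ℝ} (ha : 0 ≤ a) (hb : 0 ≤ b) (hc : 0 < c)
    (hp₀ : 0 ≤ p) (hp₁ : p ≤ 1) : a ^ p * b * c ^ (-p) ≤ b + a * (b / c) := by
  calc a ^ p * b * c ^ (-p) = (a / c) ^ p * b := by
        rw [div_rpow ha hc.le, rpow_neg hc.le]
        ring
    _ ≤ (1 + a / c) * b := by gcongr; exact rpow_le_one_add_self (by positivity) hp₀ hp₁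
    _ = b + a * (b / c) := by ring

lemma sum_l1Weight_le (hα₀ : 0 ≤ α) (hα₁ : α < 1) (ht : StrictMono t) {B : ℝ} (hB : 0 ≤ B)
    {n : ℕ} (hn : 1 ≤ n) (hratio : ∀ j ∈ Icc 1 (n - 1), meshStep t (j + 1) ≤ B * meshStep t j) :
    ∑ j ∈ Icc 1 (n - 1), l1Weight α t n j ≤
      (t n - t 1) + B * (n * meshStep t n) + 1 / Gamma (2 - α) := by
  have hIcc : Icc 1 (n - 1) = Ico 1 n := by
    ext j
    simp only [mem_Icc, mem_Ico]
    omega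
  have hτn := meshStep_pos ht hn
  have hfirst : ∑ j ∈ Icc 1 (n - 1),
      meshStep t n ^ (α / 2) * meshStep t (j + 1) * meshStep t j ^ (-(α / 2)) ≤
        (t n - t 1) + B * (n * meshStep t n) := by
    calc _ ≤ ∑ j ∈ Icc 1 (n - 1), (meshStep t (j + 1) + B * meshStep t n) := by
          refine sum_le_sum fun j hj => ?_
          have hτj := meshStep_pos ht (mem_Icc.1 hj).1
          have hquot : meshStep t (j + 1) / meshStep t j ≤ B := by
            rw [div_le_iff₀ hτj]
            exact hratio j hj
          calc _ ≤ meshStep t (j + 1) + meshStep t n * (meshStep t (j + 1) / meshStep t j) :=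
                rpow_mul_mul_rpow_neg_le hτn.le (meshStep_pos ht (by omega)).le hτj
                  (by linarith) (by linarith)
            _ ≤ meshStep t (j + 1) + B * meshStep t n := by nlinarith
      _ = (t n - t 1) + (n - 1 : ℕ) * (B * meshStep t n) := by
          rw [sum_add_distrib, sum_const, Nat.card_Icc, nsmul_eq_mul, hIcc, ← sum_Ico_sub t hn]
          rfl
      _ ≤ (t n - t 1) + B * (n * meshStep t n) := by
          have : ((n - 1 : ℕ) : ℝ) ≤ n := by exact_mod_cast n.sub_le 1
          nlinarith [mul_nonneg hB hτn.le]
  have hkernel : meshStep t n ^ α * ∑ j ∈ Icc 1 (n - 1), (l1Kernel α t n (j + 1) - l1Kernel α t n j)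
      ≤ 1 / Gamma (2 - α) := by
    rw [hIcc, sum_Ico_sub _ hn, mul_sub, meshStep_rpow_mul_l1Kernel_self hα₁ hτn]
    linarith [mul_nonneg (rpow_nonneg hτn.le α) (l1Kernel_nonneg hα₁ ht.monotone (j := 1) hn)]
  calc ∑ j ∈ Icc 1 (n - 1), l1Weight α t n j
      = ∑ j ∈ Icc 1 (n - 1),
          meshStep t n ^ (α / 2) * meshStep t (j + 1) * meshStep t j ^ (-(α / 2)) +
        meshStep t n ^ α * ∑ j ∈ Icc 1 (n - 1), (l1Kernel α t n (j + 1) - l1Kernel α t n j) := by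
        rw [mul_sum, ← sum_add_distrib]
        rfl
    _ ≤ _ := add_le_add hfirst hkernel

end L1Weight

/-- Let `α ∈ (0,1)`, `T > 0`, `δ ≥ 1`, and consider the graded mesh. For
`2 ≤ n ≤ N` and `1 ≤ j ≤ n-1` define
`w n j = τ n ^ (α/2) * τ (j+1) * (τ j) ^ (-(α/2)) + τ n ^ α * (k n (j+1) - k n j)`.
Then `w n j > 0` and there is a constant `C > 0`, depending only on `α`, `δ`, `T`,
with `∑_{j=1}^{n-1} w n j ≤ C * (1 + T)` for every `N ≥ 2` and `2 ≤ n ≤ N`. -/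
theorem graded_mesh_weights_pos_and_sum_bound
    (α T δ : ℝ) (hα : α ∈ Set.Ioo (0 : ℝ) 1) (hT : 0 < T) (hδ : 1 ≤ δ) :
    ∃ C : ℝ, 0 < C ∧
      ∀ (N : ℕ), 2 ≤ N →
        ∀ (t τ : ℕ → ℝ), (∀ m, t m = T * ((m : ℝ) / (N : ℝ)) ^ δ) →
          (∀ m, 1 ≤ m → τ m = t m - t (m - 1)) →
          ∀ (k : ℕ → ℕ → ℝ),
            (∀ n j, 1 ≤ j → j ≤ n →
              k n j = (τ j)⁻¹ / Real.Gamma (1 - α) *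
                ∫ s in (t (j - 1))..(t j), (t n - s) ^ (-α)) →
            ∀ (w : ℕ → ℕ → ℝ),
              (∀ n j, 1 ≤ j → j ≤ n - 1 →
                w n j = τ n ^ (α / 2) * τ (j + 1) * (τ j) ^ (-(α / 2)) +
                  τ n ^ α * (k n (j + 1) - k n j)) →
              ∀ n, 2 ≤ n → n ≤ N →
                (∀ j, 1 ≤ j → j ≤ n - 1 → 0 < w n j) ∧
                  ∑ j ∈ Finset.Icc 1 (n - 1), w n j ≤ C * (1 + T) := by
  obtain ⟨hα₀, hα₁⟩ := hα
  set B : ℝ := 2 ^ δ - 1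
  have hB : 0 ≤ B := sub_nonneg.2 (one_le_rpow one_le_two (by linarith))
  have hΓ : 0 < Gamma (2 - α) := Gamma_pos_of_pos (by linarith)
  refine ⟨1 + B * B + 1 / Gamma (2 - α), by positivity, ?_⟩
  intro N hN t τ ht hτ k hk w hw n hn hnN
  obtain rfl : t = gradedMesh T δ N := funext ht
  have hmesh : StrictMono (gradedMesh T δ N) := gradedMesh_strictMono hT (by linarith) (by omega)
  have hweight : ∀ j ∈ Icc 1 (n - 1), w n j = l1Weight α (gradedMesh T δ N) n j := by
    intro j hj
    obtain ⟨hj₁, hj₂⟩ := mem_Icc.1 hj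
    rw [hw n j hj₁ hj₂, hk n j hj₁ (by omega), hk n (j + 1) (by omega) (by omega)]
    simp only [hτ n (by omega), hτ j hj₁, hτ (j + 1) (by omega)]
    rfl
  refine ⟨fun j hj₁ hj₂ => ?_, ?_⟩
  · rw [hweight j (mem_Icc.2 ⟨hj₁, hj₂⟩)]
    exact l1Weight_pos hα₀.le hα₁ hmesh hj₁ (by omega)
  calc ∑ j ∈ Icc 1 (n - 1), w n j = ∑ j ∈ Icc 1 (n - 1), l1Weight α (gradedMesh T δ N) n j :=
        sum_congr rfl hweight
    _ ≤ (gradedMesh T δ N n - gradedMesh T δ N 1) +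
          B * (n * meshStep (gradedMesh T δ N) n) + 1 / Gamma (2 - α) :=
        sum_l1Weight_le hα₀.le hα₁ hmesh hB (by omega) fun j hj =>
          meshStep_gradedMesh_succ_le hT.le hδ (mem_Icc.1 hj).1
    _ ≤ T + B * (B * T) + 1 / Gamma (2 - α) := by
        gcongr ?_ + B * ?_ + _
        · linarith [gradedMesh_le (δ := δ) hT.le (by linarith) hnN,
            gradedMesh_nonneg (δ := δ) (N := N) hT.le 1]
        · exact natCast_mul_meshStep_gradedMesh_le hT.le hδ (by omega) hnN
    _ ≤ (1 + B * B + 1 / Gamma (2 - α)) * (1 + T) := by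
        nlinarith [mul_nonneg (one_div_pos.2 hΓ).le hT.le, mul_self_nonneg B]
end

section
/- Let $\alpha \in (0,1)$, $C_0 > 0$, $t_1 > 0$, and let $g : [0, t_1] \to \mathbb{R}$ be continuous on $[0,t_1]$ and differentiable on $(0, t_1)$ with $|g'(s)| \le C_0\, s^{\alpha-1}$ for all $s \in (0, t_1)$. Then the right rectangle rule error satisfies $\Big| t_1\, g(t_1) - \int_0^{t_1} g(s)\, ds \Big| \le \frac{C_0}{\alpha(\alpha+1)}\; t_1^{\,1+\alpha}.$ -/
open MeasureTheory intervalIntegral Set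

/-! If `|g'| ≤ φ'`, then `φ - g` and `φ + g` are monotone, so `|g t - g s| ≤ φ t - φ s`
with `φ s = C₀ s^α / α`. Writing the rectangle rule error as `∫₀^t (g t - g s) ds` and integrating
this bound gives the sharper constant `C₀ / (α + 1)`, which is at most `C₀ / (α (α + 1))`
because `α ≤ 1`. -/

theorem abs_sub_le_sub_of_abs_hasDerivAt_le {f φ f' φ' : ℝ → ℝ} {a b x y : ℝ}
    (hf : ContinuousOn f (Icc a b)) (hφ : ContinuousOn φ (Icc a b))
    (hf' : ∀ s ∈ Ioo a b, HasDerivAt f (f' s) s) (hφ' : ∀ s ∈ Ioo a b, HasDerivAt φ (φ' s) s)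
    (hle : ∀ s ∈ Ioo a b, |f' s| ≤ φ' s) (hx : x ∈ Icc a b) (hy : y ∈ Icc a b) (hxy : x ≤ y) :
    |f y - f x| ≤ φ y - φ x := by
  have monotone_of_deriv {h h' : ℝ → ℝ} (hc : ContinuousOn h (Icc a b))
      (hd : ∀ s ∈ Ioo a b, HasDerivAt h (h' s) s) (hn : ∀ s ∈ Ioo a b, 0 ≤ h' s) :
      MonotoneOn h (Icc a b) :=
    monotoneOn_of_hasDerivWithinAt_nonneg (convex_Icc a b) hc
      (by rw [interior_Icc]; exact fun s hs => (hd s hs).hasDerivWithinAt) (by rwa [interior_Icc])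
  have hsub := monotone_of_deriv (hφ.sub hf) (fun s hs => (hφ' s hs).sub (hf' s hs))
    (fun s hs => by linarith [le_abs_self (f' s), hle s hs]) hx hy hxy
  have hadd := monotone_of_deriv (hφ.add hf) (fun s hs => (hφ' s hs).add (hf' s hs))
    (fun s hs => by linarith [neg_abs_le (f' s), hle s hs]) hx hy hxy
  simp only [Pi.sub_apply, Pi.add_apply] at hsub hadd
  rw [abs_le]
  constructor <;> linarith

theorem abs_sub_integral_le_of_abs_sub_le {g φ : ℝ → ℝ} {a b : ℝ} (hab : a ≤ b)
    (hg : IntervalIntegrable g volume a b) (hφ : IntervalIntegrable φ volume a b)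
    (hdom : ∀ s ∈ Ioc a b, |g b - g s| ≤ φ b - φ s) :
    |(b - a) * g b - ∫ s in a..b, g s| ≤ (b - a) * φ b - ∫ s in a..b, φ s := by
  have as_integral {h : ℝ → ℝ} (hh : IntervalIntegrable h volume a b) :
      (b - a) * h b - ∫ s in a..b, h s = ∫ s in a..b, (h b - h s) := by
    rw [integral_sub intervalIntegrable_const hh, intervalIntegral.integral_const, smul_eq_mul]
  rw [as_integral hg, as_integral hφ]
  exact norm_integral_le_of_norm_le (f := fun s => g b - g s) (g := fun s => φ b - φ s) hab
    (.of_forall hdom) (intervalIntegrable_const.sub hφ)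

theorem abs_right_rectangle_error_le_of_abs_deriv_le_rpow {α C t : ℝ} {g g' : ℝ → ℝ}
    (hα : 0 < α) (ht : 0 ≤ t) (hcont : ContinuousOn g (Icc 0 t))
    (hderiv : ∀ s ∈ Ioo 0 t, HasDerivAt g (g' s) s)
    (hbound : ∀ s ∈ Ioo 0 t, |g' s| ≤ C * s ^ (α - 1)) :
    |t * g t - ∫ s in 0..t, g s| ≤ C / (α + 1) * t ^ (1 + α) := by
  set φ : ℝ → ℝ := fun s => C / α * s ^ α
  have hφ_cont : Continuous φ := continuous_const.mul (Real.continuous_rpow_const hα.le)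
  have hφ_deriv (s : ℝ) (hs : s ∈ Ioo 0 t) : HasDerivAt φ (C * s ^ (α - 1)) s := by
    refine ((Real.hasDerivAt_rpow_const (Or.inl hs.1.ne')).const_mul (C / α)).congr_deriv ?_
    field_simp
  have hdom (s : ℝ) (hs : s ∈ Ioc 0 t) : |g t - g s| ≤ φ t - φ s :=
    abs_sub_le_sub_of_abs_hasDerivAt_le hcont hφ_cont.continuousOn hderiv hφ_deriv hbound
      (Ioc_subset_Icc_self hs) (right_mem_Icc.2 ht) hs.2
  have herror := abs_sub_integral_le_of_abs_sub_le ht (hcont.intervalIntegrable_of_Icc ht)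
    (hφ_cont.intervalIntegrable _ _) hdom
  rw [sub_zero] at herror
  calc |t * g t - ∫ s in 0..t, g s| ≤ t * φ t - ∫ s in 0..t, φ s := herror
    _ = C / (α + 1) * t ^ (1 + α) := by
      simp only [φ]
      rw [intervalIntegral.integral_const_mul, integral_rpow (Or.inl (by linarith)),
        Real.zero_rpow (by positivity), add_comm α 1, Real.rpow_one_add' ht (by positivity)]
      field_simp
      ring

/-- Right rectangle rule error for a function with a weak singularity of its
derivative at `0`: if `g` is continuous on `[0,t₁]`, differentiable on `(0,t₁)`
with `|g'(s)| ≤ C₀ s^(α-1)`, then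
`|t₁ g(t₁) - ∫₀^{t₁} g| ≤ C₀/(α(α+1)) * t₁^(1+α)`. -/
theorem right_rectangle_rule_error
    (α C₀ t₁ : ℝ) (hα : α ∈ Set.Ioo (0 : ℝ) 1) (hC₀ : 0 < C₀) (ht₁ : 0 < t₁)
    (g g' : ℝ → ℝ)
    (hcont : ContinuousOn g (Set.Icc 0 t₁))
    (hderiv : ∀ s ∈ Set.Ioo (0 : ℝ) t₁, HasDerivAt g (g' s) s)
    (hbound : ∀ s ∈ Set.Ioo (0 : ℝ) t₁, |g' s| ≤ C₀ * s ^ (α - 1)) :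
    |t₁ * g t₁ - ∫ s in (0 : ℝ)..t₁, g s| ≤ C₀ / (α * (α + 1)) * t₁ ^ (1 + α) := by
  obtain ⟨hα₀, hα₁⟩ := hα
  calc |t₁ * g t₁ - ∫ s in (0 : ℝ)..t₁, g s| ≤ C₀ / (α + 1) * t₁ ^ (1 + α) :=
        abs_right_rectangle_error_le_of_abs_deriv_le_rpow hα₀ ht₁.le hcont hderiv hbound
    _ ≤ C₀ / (α * (α + 1)) * t₁ ^ (1 + α) := by
      gcongr
      nlinarith
end

section
/- Let $\alpha \in (0,1)$, $T > 0$, $\delta \ge 1$, and consider the graded mesh. There exists a constant $C > 0$, depending only on $\alpha$, $\delta$ and $T$, such that for every $N \ge 2$ and every integer $j$ with $1 \le j \le N-1$: $\tau_{j+1}^{3}\; t_j^{\,\alpha-2} \le C\, j^{\,\delta(\alpha+1)-3}\; N^{-\delta(\alpha+1)}.$ -/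
/-!
By the mean value theorem, `(j + 1) ^ δ - j ^ δ ≤ δ (2 j) ^ (δ - 1)` for `j ≥ 1` and `δ ≥ 1`,
so `τ (j + 1) ≲ j ^ (δ - 1) N ^ (-δ)`, while `t j = T j ^ δ N ^ (-δ)` exactly. The rest is
bookkeeping of exponents: `3 (δ - 1) + δ (α - 2) = δ (α + 1) - 3` and
`-3 δ - δ (α - 2) = -δ (α + 1)`.
-/

open Real

lemma rpow_add_one_sub_rpow_le {δ x : ℝ} (hδ : 1 ≤ δ) (hx : 1 ≤ x) :
    (x + 1) ^ δ - x ^ δ ≤ δ * 2 ^ (δ - 1) * x ^ (δ - 1) := by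
  obtain ⟨c, ⟨hxc, hcx⟩, hslope⟩ := exists_hasDerivAt_eq_slope (fun y => y ^ δ)
    (fun y => δ * y ^ (δ - 1)) (lt_add_one x)
    (continuous_id.rpow_const fun _ => Or.inr (by linarith)).continuousOn
    fun _ _ => hasDerivAt_rpow_const (Or.inr hδ)
  have hmvt : (x + 1) ^ δ - x ^ δ = δ * c ^ (δ - 1) := by
    rw [hslope, add_sub_cancel_left, div_one]
  -- the intermediate point satisfies `c ≤ x + 1 ≤ 2 x`
  have hc : c ^ (δ - 1) ≤ (2 * x) ^ (δ - 1) := by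
    gcongr <;> linarith
  rw [hmvt, mul_assoc, ← mul_rpow zero_le_two (by linarith)]
  gcongr

lemma mul_div_rpow_eq_mul_rpow_neg {T x N δ : ℝ} (hx : 0 ≤ x) (hN : 0 ≤ N) :
    T * (x / N) ^ δ = T * x ^ δ * N ^ (-δ) := by
  rw [div_rpow hx hN, rpow_neg hN, mul_div_assoc', div_eq_mul_inv]

lemma gradedMesh_step_nonneg {T δ j N : ℝ} (hT : 0 ≤ T) (hδ : 0 ≤ δ) (hj : 0 ≤ j) (hN : 0 ≤ N) :
    0 ≤ T * ((j + 1) / N) ^ δ - T * (j / N) ^ δ := by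
  rw [sub_nonneg]
  gcongr
  linarith

lemma gradedMesh_step_le {T δ j N : ℝ} (hT : 0 ≤ T) (hδ : 1 ≤ δ) (hj : 1 ≤ j) (hN : 0 ≤ N) :
    T * ((j + 1) / N) ^ δ - T * (j / N) ^ δ ≤
      T * δ * 2 ^ (δ - 1) * j ^ (δ - 1) * N ^ (-δ) := by
  rw [mul_div_rpow_eq_mul_rpow_neg (by linarith) hN,
    mul_div_rpow_eq_mul_rpow_neg (by linarith) hN, ← sub_mul, ← mul_sub]
  calc T * ((j + 1) ^ δ - j ^ δ) * N ^ (-δ)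
      ≤ T * (δ * 2 ^ (δ - 1) * j ^ (δ - 1)) * N ^ (-δ) := by
        gcongr
        exact rpow_add_one_sub_rpow_le hδ hj
    _ = T * δ * 2 ^ (δ - 1) * j ^ (δ - 1) * N ^ (-δ) := by ring

lemma cube_mul_rpow_of_monomials {x y : ℝ} (hx : 0 < x) (hy : 0 < y) {K T : ℝ} (hT : 0 ≤ T)
    (a b c d r : ℝ) :
    (K * x ^ a * y ^ b) ^ 3 * (T * x ^ c * y ^ d) ^ r =
      K ^ 3 * T ^ r * x ^ (a * 3 + c * r) * y ^ (b * 3 + d * r) := by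
  rw [mul_pow, mul_pow, mul_rpow (by positivity) (by positivity), mul_rpow hT (by positivity),
    ← rpow_mul hx.le, ← rpow_mul hy.le, ← rpow_mul_natCast hx.le, ← rpow_mul_natCast hy.le,
    rpow_add hx, rpow_add hy]
  push_cast
  ring

theorem graded_mesh_cubic_step_bound_general
    (α T δ : ℝ) (hT : 0 < T) (hδ : 1 ≤ δ) :
    ∃ C : ℝ, 0 < C ∧
      ∀ (N : ℕ), 2 ≤ N →
        ∀ (t τ : ℕ → ℝ), (∀ m, t m = T * ((m : ℝ) / (N : ℝ)) ^ δ) →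
          (∀ m, 1 ≤ m → τ m = t m - t (m - 1)) →
          ∀ j, 1 ≤ j → j ≤ N - 1 →
            τ (j + 1) ^ 3 * t j ^ (α - 2) ≤
              C * (j : ℝ) ^ (δ * (α + 1) - 3) * (N : ℝ) ^ (-(δ * (α + 1))) := by
  set K := T * δ * 2 ^ (δ - 1)
  refine ⟨K ^ 3 * T ^ (α - 2), by positivity, fun N hN t τ ht hτ j hj _ => ?_⟩
  have hj₀ : (0 : ℝ) < j := by exact_mod_cast hj
  have hN₀ : (0 : ℝ) < N := by positivity
  have hτj : τ (j + 1) = T * ((j + 1) / N) ^ δ - T * (j / N) ^ δ := by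
    rw [hτ _ (by omega), ht, ht, Nat.add_sub_cancel, Nat.cast_succ]
  have hτ_nonneg : 0 ≤ τ (j + 1) :=
    hτj ▸ gradedMesh_step_nonneg hT.le (by linarith) hj₀.le hN₀.le
  have hτ_le : τ (j + 1) ≤ K * (j : ℝ) ^ (δ - 1) * (N : ℝ) ^ (-δ) :=
    hτj ▸ gradedMesh_step_le hT.le hδ (by exact_mod_cast hj) hN₀.le
  have htj : t j = T * (j : ℝ) ^ δ * (N : ℝ) ^ (-δ) := by
    rw [ht, mul_div_rpow_eq_mul_rpow_neg hj₀.le hN₀.le]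
  calc τ (j + 1) ^ 3 * t j ^ (α - 2)
      ≤ (K * (j : ℝ) ^ (δ - 1) * (N : ℝ) ^ (-δ)) ^ 3 *
          (T * (j : ℝ) ^ δ * (N : ℝ) ^ (-δ)) ^ (α - 2) := by
        rw [htj]; gcongr
    _ = K ^ 3 * T ^ (α - 2) * (j : ℝ) ^ (δ * (α + 1) - 3) *
          (N : ℝ) ^ (-(δ * (α + 1))) := by
        rw [cube_mul_rpow_of_monomials hj₀ hN₀ hT.le]
        ring_nf

/-- On the graded mesh there is a constant `C > 0`, depending only on `α`, `δ`, `T`,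
such that `τ (j+1) ^ 3 * t j ^ (α-2) ≤ C * j^(δ(α+1)-3) * N^(-δ(α+1))`
for all `N ≥ 2` and `1 ≤ j ≤ N - 1`. -/
theorem graded_mesh_cubic_step_bound
    (α T δ : ℝ) (hα : α ∈ Set.Ioo (0 : ℝ) 1) (hT : 0 < T) (hδ : 1 ≤ δ) :
    ∃ C : ℝ, 0 < C ∧
      ∀ (N : ℕ), 2 ≤ N →
        ∀ (t τ : ℕ → ℝ), (∀ m, t m = T * ((m : ℝ) / (N : ℝ)) ^ δ) →
          (∀ m, 1 ≤ m → τ m = t m - t (m - 1)) →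
          ∀ j, 1 ≤ j → j ≤ N - 1 →
            τ (j + 1) ^ 3 * t j ^ (α - 2) ≤
              C * (j : ℝ) ^ (δ * (α + 1) - 3) * (N : ℝ) ^ (-(δ * (α + 1))) :=
  graded_mesh_cubic_step_bound_general α T δ hT hδ
end

section
/- Let $\alpha \in (0,1)$, $T > 0$, $\delta \ge 1$, and consider the graded mesh. There exists a constant $C > 0$, depending only on $\alpha$, $\delta$ and $T$, such that for every $N \ge 2$ and every integer $n$ with $2 \le n \le N$: $\tau_n^{2}\; t_{n-1}^{\,\alpha-1} \le C\, n^{\,\delta(1+\alpha)-2}\; N^{-\delta(1+\alpha)}.$ -/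
open Real

lemma key_mvt (δ : ℝ) (hδ : 1 ≤ δ) (x : ℝ) (hx : 2 ≤ x) :
    x ^ δ - (x - 1) ^ δ ≤ δ * x ^ (δ - 1) := by
  have h1 : (1:ℝ) ≤ x - 1 := by linarith
  obtain ⟨c, hc, hc'⟩ := exists_hasDerivAt_eq_slope (fun y => y ^ δ)
    (fun y => δ * y ^ (δ - 1)) (by linarith : x - 1 < x)
    (by
      apply ContinuousOn.rpow_const continuousOn_id
      intro y hy
      simp only [Set.mem_Icc] at hy
      exact Or.inl (by simp; intro h; rw [h] at hy; linarith [hy.1]))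
    (fun y hy => Real.hasDerivAt_rpow_const (Or.inl (by
      simp only [Set.mem_Ioo] at hy; intro h; rw [h] at hy; linarith [hy.1])))
  simp only [Set.mem_Ioo] at hc
  have h0c : 0 < c := by linarith [hc.1]
  rw [sub_sub_cancel, div_one] at hc'
  rw [← hc']
  have : c ^ (δ - 1) ≤ x ^ (δ - 1) :=
    Real.rpow_le_rpow h0c.le hc.2.le (by linarith)
  nlinarith [Real.rpow_nonneg h0c.le (δ-1)]

lemma alg_eq (T δ α a b : ℝ) (hT : 0 < T) (hδ : 0 < δ) (ha : 0 < a) (hb : 0 < b) :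
    (T * δ * a ^ (δ - 1) / b ^ δ) ^ 2 * (T * (a / (2 * b)) ^ δ) ^ (α - 1) =
      (T ^ (1 + α) * δ ^ 2 * 2 ^ (δ * (1 - α))) * a ^ (δ * (1 + α) - 2) *
        b ^ (-(δ * (1 + α))) := by
  have h2 : (0:ℝ) < 2 := two_pos
  have hx : ∀ (x y : ℝ), 0 < x → x ^ y = Real.exp (y * Real.log x) := by
    intro x y h; rw [Real.rpow_def_of_pos h, mul_comm]
  have e1 : T * δ * a ^ (δ - 1) / b ^ δ =
      Real.exp (Real.log T + Real.log δ + (δ-1) * Real.log a - δ * Real.log b) := by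
    rw [hx a _ ha, hx b _ hb, Real.exp_sub, Real.exp_add, Real.exp_add,
      Real.exp_log hT, Real.exp_log hδ]
  have e2 : T * (a / (2 * b)) ^ δ =
      Real.exp (Real.log T + δ * (Real.log a - (Real.log 2 + Real.log b))) := by
    rw [hx _ δ (by positivity), Real.log_div ha.ne' (by positivity),
      Real.log_mul h2.ne' hb.ne', Real.exp_add, Real.exp_log hT]
  have eδ : δ ^ 2 = Real.exp ((2:ℕ) * Real.log δ) := by
    rw [Real.exp_nat_mul, Real.exp_log hδ]
  rw [e1, e2, hx _ (α-1) (Real.exp_pos _),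
    hx T (1+α) hT, eδ, hx 2 (δ*(1-α)) h2,
    hx a (δ*(1+α)-2) ha, hx b (-(δ*(1+α))) hb]
  simp only [Real.log_exp]
  rw [← Real.exp_nat_mul]
  rw [← Real.exp_add, ← Real.exp_add, ← Real.exp_add, ← Real.exp_add, ← Real.exp_add]
  congr 1
  push_cast
  ring

/-- On the graded mesh there is a constant `C > 0`, depending only on `α`, `δ`, `T`,
such that `τ n ^ 2 * t (n-1) ^ (α-1) ≤ C * n^(δ(1+α)-2) * N^(-δ(1+α))`
for all `N ≥ 2` and `2 ≤ n ≤ N`. -/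
theorem graded_mesh_quadratic_step_bound
    (α T δ : ℝ) (hα : α ∈ Set.Ioo (0 : ℝ) 1) (hT : 0 < T) (hδ : 1 ≤ δ) :
    ∃ C : ℝ, 0 < C ∧
      ∀ (N : ℕ), 2 ≤ N →
        ∀ (t τ : ℕ → ℝ), (∀ m, t m = T * ((m : ℝ) / (N : ℝ)) ^ δ) →
          (∀ m, 1 ≤ m → τ m = t m - t (m - 1)) →
          ∀ n, 2 ≤ n → n ≤ N →
            τ n ^ 2 * t (n - 1) ^ (α - 1) ≤
              C * (n : ℝ) ^ (δ * (1 + α) - 2) * (N : ℝ) ^ (-(δ * (1 + α))) := by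
  obtain ⟨hα0, hα1⟩ := hα
  have hδ0 : (0:ℝ) < δ := lt_of_lt_of_le one_pos hδ
  refine ⟨T ^ (1 + α) * δ ^ 2 * 2 ^ (δ * (1 - α)), by positivity, ?_⟩
  intro N hN t τ ht hτ n hn2 hnN
  have hb : (0:ℝ) < N := by exact_mod_cast (by omega : 0 < N)
  have ha2 : (2:ℝ) ≤ (n:ℝ) := by exact_mod_cast hn2
  have ha : (0:ℝ) < (n:ℝ) := by linarith
  have hcast : ((n-1:ℕ):ℝ) = (n:ℝ) - 1 := by
    have : (1:ℕ) ≤ n := by omega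
    push_cast [this]; ring
  rw [hτ n (by omega), ht n, ht (n-1), hcast]
  set a := (n:ℝ)
  set b := (N:ℝ)
  have h1a : (1:ℝ) ≤ a - 1 := by linarith
  have hq1 : 0 < (a - 1) / b := by positivity
  have hq2 : 0 < a / (2 * b) := by positivity
  have hbase2 : a / (2 * b) ≤ (a - 1) / b := by
    rw [div_le_div_iff₀ (by positivity) hb]
    nlinarith
  have nonneg1 : 0 ≤ T * (a / b) ^ δ - T * ((a - 1) / b) ^ δ := by
    have : ((a-1)/b) ^ δ ≤ (a/b) ^ δ :=
      Real.rpow_le_rpow hq1.le (by rw [div_le_div_iff₀ hb hb]; nlinarith) hδ0.le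
    nlinarith
  have bound1 : T * (a / b) ^ δ - T * ((a - 1) / b) ^ δ ≤ T * δ * a ^ (δ - 1) / b ^ δ := by
    rw [Real.div_rpow ha.le hb.le, Real.div_rpow (by linarith) hb.le]
    have key := key_mvt δ hδ a ha2
    have hbd : 0 < b ^ δ := Real.rpow_pos_of_pos hb δ
    rw [show T * (a ^ δ / b ^ δ) - T * ((a-1) ^ δ / b ^ δ)
        = T * (a ^ δ - (a-1) ^ δ) / b ^ δ by ring,
      show T * δ * a ^ (δ - 1) / b ^ δ = T * (δ * a ^ (δ-1)) / b ^ δ by ring]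
    gcongr
  have bound2 : (T * ((a - 1) / b) ^ δ) ^ (α - 1) ≤ (T * (a / (2 * b)) ^ δ) ^ (α - 1) := by
    apply Real.rpow_le_rpow_of_nonpos (by positivity) _ (by linarith)
    gcongr
  calc (T * (a / b) ^ δ - T * ((a - 1) / b) ^ δ) ^ 2 * (T * ((a - 1) / b) ^ δ) ^ (α - 1)
      ≤ (T * δ * a ^ (δ - 1) / b ^ δ) ^ 2 * (T * (a / (2 * b)) ^ δ) ^ (α - 1) := by
        apply mul_le_mul (pow_le_pow_left₀ nonneg1 bound1 2) bound2
          (Real.rpow_nonneg (by positivity) _) (by positivity)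
    _ = (T ^ (1 + α) * δ ^ 2 * 2 ^ (δ * (1 - α))) * a ^ (δ * (1 + α) - 2) *
          b ^ (-(δ * (1 + α))) := alg_eq T δ α a b hT hδ0 ha hb
end
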